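/- Let α₀ ∈ ℂ, U ⊆ ℂ open, and let (q₁, p₁, q₂, p₂) be differentiable functions on U solving the t-flow of the autonomous system (A1): q₁' = q₁² + p₂, p₁' = −2 q₁ p₁ − 3α₀, q₂' = −(1/2) p₂² + p₁, p₂' = q₂. Then u := −q₁ is four times complex differentiable on U and satisfies the autonomous fourth-order equation u'''' = 5 u² u'' − u⁵ + 5 u (u')² − 5 u' u'' + 3α₀ on U. -/

import Mathlib

/-- `(q₁,p₁,q₂,p₂)` solves the `t`-flow of the autonomous system (A1) with
parameter `α₀` on `U`: `q₁' = q₁² + p₂`, `p₁' = -2q₁p₁ - 3α₀`,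
`q₂' = -(1/2)p₂² + p₁`, `p₂' = q₂`. -/
def SolvesA1 (a0 : ℂ) (U : Set ℂ) (q1 p1 q2 p2 : ℂ → ℂ) : Prop :=
  ∀ t ∈ U,
    HasDerivAt q1 (q1 t ^ 2 + p2 t) t ∧
    HasDerivAt p1 (-2 * q1 t * p1 t - 3 * a0) t ∧
    HasDerivAt q2 (-(1/2) * p2 t ^ 2 + p1 t) t ∧
    HasDerivAt p2 (q2 t) t

/-!
By the chain rule along the flow, `q₁'`, `q₁''`, `q₁'''`, `q₁''''` are polynomials in the state
`(q₁, p₁, q₂, p₂)`, each obtained from the previous one. The formulas for `q₁'` and `q₁''` are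
triangular in `p₂` and `q₂`, which can therefore be eliminated from the one for `q₁''''`; there the
`p₁`-terms cancel, leaving an ODE for `q₁` alone.
-/

theorem IsOpen.hasDerivAt_deriv {𝕜 F : Type*} [NontriviallyNormedField 𝕜] [NormedAddCommGroup F]
    [NormedSpace 𝕜 F] {U : Set 𝕜} (hU : IsOpen U) {f f' : 𝕜 → F} {f'' : F} {t : 𝕜}
    (hf : ∀ s ∈ U, HasDerivAt f (f' s) s) (ht : t ∈ U) (hf' : HasDerivAt f' f'' t) :
    HasDerivAt (deriv f) f'' t :=
  hf'.congr_of_eventuallyEq <|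
    Filter.eventually_of_mem (hU.mem_nhds ht) fun s hs => (hf s hs).deriv

namespace A1

def dq1 (q1 p2 : ℂ → ℂ) (s : ℂ) : ℂ :=
  q1 s ^ 2 + p2 s

def d2q1 (q1 q2 p2 : ℂ → ℂ) (s : ℂ) : ℂ :=
  2 * q1 s * dq1 q1 p2 s + q2 s

noncomputable def d3q1 (q1 p1 q2 p2 : ℂ → ℂ) (s : ℂ) : ℂ :=
  2 * dq1 q1 p2 s ^ 2 + 2 * q1 s * d2q1 q1 q2 p2 s - p2 s ^ 2 / 2 + p1 s

noncomputable def d4q1 (a0 : ℂ) (q1 p1 q2 p2 : ℂ → ℂ) (s : ℂ) : ℂ :=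
  6 * dq1 q1 p2 s * d2q1 q1 q2 p2 s + 2 * q1 s * d3q1 q1 p1 q2 p2 s
    - p2 s * q2 s - 2 * q1 s * p1 s - 3 * a0

theorem d4q1_eq (a0 : ℂ) (q1 p1 q2 p2 : ℂ → ℂ) (s : ℂ) :
    d4q1 a0 q1 p1 q2 p2 s = 5 * q1 s ^ 2 * d2q1 q1 q2 p2 s - q1 s ^ 5
      + 5 * q1 s * dq1 q1 p2 s ^ 2 + 5 * dq1 q1 p2 s * d2q1 q1 q2 p2 s - 3 * a0 := by
  simp only [d4q1, d3q1, d2q1, dq1]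
  ring

end A1

namespace SolvesA1

variable {a0 : ℂ} {U : Set ℂ} {q1 p1 q2 p2 : ℂ → ℂ} {t : ℂ}

theorem hasDerivAt_dq1 (h : SolvesA1 a0 U q1 p1 q2 p2) (ht : t ∈ U) :
    HasDerivAt (A1.dq1 q1 p2) (A1.d2q1 q1 q2 p2 t) t := by
  obtain ⟨hq1, -, -, hp2⟩ := h t ht
  refine ((hq1.fun_pow 2).fun_add hp2).congr_deriv ?_
  simp only [A1.d2q1, A1.dq1, Nat.cast_ofNat]
  ring

theorem hasDerivAt_d2q1 (h : SolvesA1 a0 U q1 p1 q2 p2) (ht : t ∈ U) :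
    HasDerivAt (A1.d2q1 q1 q2 p2) (A1.d3q1 q1 p1 q2 p2 t) t := by
  obtain ⟨hq1, -, hq2, -⟩ := h t ht
  refine (((hq1.const_mul 2).fun_mul (h.hasDerivAt_dq1 ht)).fun_add hq2).congr_deriv ?_
  simp only [A1.d3q1, A1.dq1]
  ring

theorem hasDerivAt_d3q1 (h : SolvesA1 a0 U q1 p1 q2 p2) (ht : t ∈ U) :
    HasDerivAt (A1.d3q1 q1 p1 q2 p2) (A1.d4q1 a0 q1 p1 q2 p2 t) t := by
  obtain ⟨hq1, hp1, -, hp2⟩ := h t ht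
  refine (((((h.hasDerivAt_dq1 ht).fun_pow 2).const_mul 2).fun_add
    ((hq1.const_mul 2).fun_mul (h.hasDerivAt_d2q1 ht))).fun_sub ((hp2.fun_pow 2).div_const 2)
    |>.fun_add hp1).congr_deriv ?_
  simp only [A1.d4q1, A1.dq1, Nat.cast_ofNat]
  ring

end SolvesA1

/-- If `(q₁,p₁,q₂,p₂)` solves the `t`-flow of the autonomous
system (A1) with parameter `α₀`, then `u := -q₁` is four times complex
differentiable and solves the autonomous fourth-order equation
`u'''' = 5u²u'' - u⁵ + 5u(u')² - 5u'u'' + 3α₀`. -/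
theorem stmt18 (a0 : ℂ) (U : Set ℂ) (hU : IsOpen U)
    (q1 p1 q2 p2 : ℂ → ℂ) (h : SolvesA1 a0 U q1 p1 q2 p2) :
    ∀ t ∈ U,
      (HasDerivAt (fun s => -q1 s) (deriv (fun s => -q1 s) t) t) ∧
      (HasDerivAt (deriv (fun s => -q1 s)) (deriv (deriv (fun s => -q1 s)) t) t) ∧
      (HasDerivAt (deriv (deriv (fun s => -q1 s)))
        (deriv (deriv (deriv (fun s => -q1 s))) t) t) ∧
      (HasDerivAt (deriv (deriv (deriv (fun s => -q1 s))))
        (deriv (deriv (deriv (deriv (fun s => -q1 s)))) t) t) ∧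
      deriv (deriv (deriv (deriv (fun s => -q1 s)))) t =
        5 * (-q1 t) ^ 2 * deriv (deriv (fun s => -q1 s)) t - (-q1 t) ^ 5
          + 5 * (-q1 t) * (deriv (fun s => -q1 s) t) ^ 2
          - 5 * deriv (fun s => -q1 s) t * deriv (deriv (fun s => -q1 s)) t
          + 3 * a0 := by
  intro t ht
  have hu : ∀ s ∈ U, HasDerivAt (fun s => -q1 s) (-A1.dq1 q1 p2 s) s :=
    fun s hs => (h s hs).1.neg
  have hu' : ∀ s ∈ U, HasDerivAt (deriv fun s => -q1 s) (-A1.d2q1 q1 q2 p2 s) s :=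
    fun s hs => hU.hasDerivAt_deriv hu hs (h.hasDerivAt_dq1 hs).neg
  have hu'' : ∀ s ∈ U, HasDerivAt (deriv (deriv fun s => -q1 s)) (-A1.d3q1 q1 p1 q2 p2 s) s :=
    fun s hs => hU.hasDerivAt_deriv hu' hs (h.hasDerivAt_d2q1 hs).neg
  have hu''' : HasDerivAt (deriv (deriv (deriv fun s => -q1 s))) (-A1.d4q1 a0 q1 p1 q2 p2 t) t :=
    hU.hasDerivAt_deriv hu'' ht (h.hasDerivAt_d3q1 ht).neg
  rw [hu'''.deriv, (hu'' t ht).deriv, (hu' t ht).deriv, (hu t ht).deriv]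
  refine ⟨hu t ht, hu' t ht, hu'' t ht, hu''', ?_⟩
  rw [A1.d4q1_eq]
  ring
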